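/- arXiv:2011.06617 — 4 statements merged into one kernel-verified Lean document; each statement's English description precedes it below -/
import Mathlib

section
/- The generalized summation operator ⊕ on ΔV matrices is associative: for all d×h matrices A, B, C with entries in ℝ≥0∞, (A ⊕ B) ⊕ C = A ⊕ (B ⊕ C). -/
open scoped ENNReal

/-- Generalized summation of ΔV matrices (1-based math indices encoded as 0-based `Fin`). -/
noncomputable def oplus {d h : ℕ} (A B : Fin d → Fin h → ℝ≥0∞) (i : Fin d) (j : Fin h) : ℝ≥0∞ :=
  sInf { x | ∃ k : ℕ, ∃ (h1 : 1 ≤ k) (h2 : k ≤ i.val) (h3 : j.val + k < h),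
    x = A ⟨k - 1, by have := i.isLt; omega⟩ j
      + B ⟨i.val - k, by have := i.isLt; omega⟩ ⟨j.val + k, h3⟩ }

private lemma add_sInf' (a : ℝ≥0∞) (s : Set ℝ≥0∞) : a + sInf s = ⨅ b ∈ s, a + b := by
  rw [add_comm, ENNReal.sInf_add]
  simp [add_comm]

theorem oplus_assoc {d h : ℕ} (hd : 0 < d) (hh : 0 < h)
    (A B C : Fin d → Fin h → ℝ≥0∞) :
    oplus (oplus A B) C = oplus A (oplus B C) := by
  funext i j
  apply le_antisymm
  · apply le_sInf
    rintro x ⟨k, hk1, hk2, hk3, rfl⟩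
    conv_rhs => rw [oplus]
    rw [add_sInf']
    refine le_iInf₂ ?_
    rintro b ⟨m, hm1, hm2, hm3, rfl⟩
    have hm2' : m ≤ i.val - k := hm2
    have hm3' : j.val + k + m < h := hm3
    rw [← add_assoc]
    refine sInf_le_of_le ⟨k + m, by omega, by omega, by omega, rfl⟩ ?_
    refine add_le_add ?_ (le_of_eq ?_)
    · refine sInf_le ⟨k, by omega, by first | omega | (simp; omega),
        by first | omega | (simp; omega), ?_⟩
      congr 2 <;> first | rfl | omega | (simp; omega)
    · congr 2 <;> first | rfl | omega | (simp; omega)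
  · apply le_sInf
    rintro x ⟨k, hk1, hk2, hk3, rfl⟩
    conv_rhs => rw [oplus]
    rw [ENNReal.sInf_add]
    refine le_iInf₂ ?_
    rintro b ⟨m, hm1, hm2, hm3, rfl⟩
    have hm2' : m ≤ k - 1 := hm2
    rw [add_assoc]
    refine sInf_le_of_le ⟨m, by omega, by omega, by omega, rfl⟩ ?_
    refine add_le_add (le_of_eq rfl) ?_
    refine sInf_le ⟨k - m, by omega, by first | omega | (simp; omega),
      by first | omega | (simp; omega), ?_⟩
    congr 2 <;> first | rfl | omega | (simp; omega)
end

section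
/- If A and B are d×h ΔV matrices satisfying the diagonal monotonicity property A_{i,j} ≤ A_{i−1, j+1} (respectively for B) for all 2 ≤ i ≤ d and 1 ≤ j ≤ h−1, then A ⊕ B also satisfies this property: (A⊕B)_{i,j} ≤ (A⊕B)_{i−1, j+1} for all 2 ≤ i ≤ d and 1 ≤ j ≤ h−1. -/
open scoped ENNReal

/-- Diagonal monotonicity (wait-adjustedness) property. -/
def DiagMono {d h : ℕ} (M : Fin d → Fin h → ℝ≥0∞) : Prop :=
  ∀ (i : Fin d) (j : Fin h) (hi : 1 ≤ i.val) (hj : j.val + 1 < h),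
    M i j ≤ M ⟨i.val - 1, by have := i.isLt; omega⟩ ⟨j.val + 1, hj⟩

theorem oplus_preserves_diagMono {d h : ℕ} (hd : 0 < d) (hh : 0 < h)
    (A B : Fin d → Fin h → ℝ≥0∞) (hA : DiagMono A) (hB : DiagMono B) :
    DiagMono (oplus A B) := by
  intro i j hi hj
  apply le_sInf
  rintro x ⟨k, h1, h2, h3, rfl⟩
  simp only at h2 h3
  have step : oplus A B i j ≤
      A ⟨k, by have := i.isLt; omega⟩ j
        + B ⟨i.val - (k + 1), by have := i.isLt; omega⟩ ⟨j.val + (k + 1), by omega⟩ := by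
    refine sInf_le ?_
    exact ⟨k + 1, by omega, by omega, by omega, rfl⟩
  refine step.trans (add_le_add ?_ ?_)
  · have h4 : (j.val) + 1 < h := by omega
    have := hA ⟨k, by have := i.isLt; omega⟩ j h1 h4
    refine this.trans (le_of_eq ?_)
    congr 1
  · exact le_of_eq (by congr 1 <;> exact Fin.ext (by simp <;> omega))
end

section
/- A d×h ΔV matrix M is a fixed point of the wait-adjustment operator, i.e., W(M) = M, if and only if M satisfies the diagonal monotonicity property M_{i,j} ≤ M_{i−1, j+1} for all 2 ≤ i ≤ d and 1 ≤ j ≤ h−1. -/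
open scoped ENNReal

/-- Wait-adjustment of a ΔV matrix. -/
noncomputable def wadj {d h : ℕ} (M : Fin d → Fin h → ℝ≥0∞) (i : Fin d) (j : Fin h) : ℝ≥0∞ :=
  sInf { x | ∃ t : ℕ, ∃ (h1 : t ≤ i.val) (h2 : j.val + t < h),
    x = M ⟨i.val - t, by have := i.isLt; omega⟩ ⟨j.val + t, h2⟩ }

theorem wadj_fixed_iff_diagMono {d h : ℕ} (hd : 0 < d) (hh : 0 < h)
    (M : Fin d → Fin h → ℝ≥0∞) :
    wadj M = M ↔ DiagMono M := by
  constructor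
  · intro hfix i j hi hj
    have hij := congrFun (congrFun hfix i) j
    calc M i j = wadj M i j := hij.symm
    _ ≤ M ⟨i.val - 1, by have := i.isLt; omega⟩ ⟨j.val + 1, hj⟩ := by
        apply sInf_le
        exact ⟨1, hi, hj, rfl⟩
  · intro hmono
    funext i j
    apply le_antisymm
    · apply sInf_le
      refine ⟨0, Nat.zero_le _, by omega, ?_⟩
      congr 1 <;> exact (Fin.ext (by omega))
    · apply le_sInf
      rintro x ⟨t, h1, h2, rfl⟩
      induction t with
      | zero =>
        have : (⟨i.val - 0, by have := i.isLt; omega⟩ : Fin d) = i := Fin.ext (by simp)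
        rw [this]
        have : (⟨j.val + 0, by omega⟩ : Fin h) = j := Fin.ext (by simp)
        rw [this]
      | succ n ih =>
        have hn1 : n ≤ i.val := by omega
        have hn2 : j.val + n < h := by omega
        refine le_trans (ih hn1 hn2) ?_
        have := hmono ⟨i.val - n, by have := i.isLt; omega⟩ ⟨j.val + n, hn2⟩
          (by simp; omega) (by simp; omega)
        convert this using 2
        · rfl
        all_goals simp <;> omega
end

section
/- If A and B are wait-adjusted d×h ΔV matrices (i.e., W(A) = A and W(B) = B), then their concatenation is also wait-adjusted: W(A ⊕ B) = A ⊕ B. -/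
open scoped ENNReal

theorem oplus_wait_adjusted {d h : ℕ} (hd : 0 < d) (hh : 0 < h)
    (A B : Fin d → Fin h → ℝ≥0∞) (hA : wadj A = A) (hB : wadj B = B) :
    wadj (oplus A B) = oplus A B := by
  funext i j
  apply le_antisymm
  · apply sInf_le
    refine ⟨0, Nat.zero_le _, by omega, ?_⟩
    congr 1 <;> ext <;> simp
  · apply le_sInf
    rintro x ⟨t, ht, hjt, rfl⟩
    apply le_sInf
    rintro y ⟨k, hk1, hk2, hk3, rfl⟩
    have hi := i.isLt
    simp only [Fin.val_mk] at hk2 hk3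
    refine le_trans (sInf_le ⟨k + t, by omega, by omega, by omega, rfl⟩) ?_
    gcongr ?_ + ?_
    · conv_lhs => rw [← hA]
      apply sInf_le
      refine ⟨t, by simp only [Fin.val_mk]; omega, by omega, ?_⟩
      congr 1 <;> ext <;> simp only [Fin.val_mk] <;> omega
    · apply le_of_eq
      congr 1 <;> ext <;> simp only [Fin.val_mk] <;> omega
end
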